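/- arXiv:2305.13231 — 4 statements merged into one kernel-verified Lean document; each statement's English description precedes it below -/
import Mathlib

section
/- Let u(x,y) be a nonzero polynomial in ℤ[x,y] all of whose coefficients lie in {-1,0,1}. Then 1 + x + y does not divide u(x³, y³) in ℤ[x,y]. -/
/-!
Over a field containing a primitive cube root of unity `ω`, the substitutions `x ↦ ω^a x`,
`y ↦ ω^b y` fix `u(x³, y³)`, so the nine pairwise non-associate primes `1 + ω^a x + ω^b y` all
divide it, and hence so does their product `(1 + x³ + y³)³ - 27x³y³`. That product has constant
term `1`, so the divisibility descends to `ℤ[x,y]`. In it, the coefficient `-21` of `x³y³` equals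
in absolute value the sum of all the other coefficients, `7` of which sit on monomials of lower
degree; this forces every nonzero integer multiple to have a coefficient of absolute value at
least `7`, which a flat polynomial does not have.
-/

open MvPolynomial

namespace MvPolynomial

section L1Norm

variable {σ : Type*}

def l1Norm (p : MvPolynomial σ ℤ) : ℤ := ∑ m ∈ p.support, |coeff m p|

lemma l1Norm_nonneg (p : MvPolynomial σ ℤ) : 0 ≤ l1Norm p :=
  Finset.sum_nonneg fun _ _ => abs_nonneg _

lemma l1Norm_eq_sum_of_support_subset {p : MvPolynomial σ ℤ} {s : Finset (σ →₀ ℕ)}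
    (hs : p.support ⊆ s) : l1Norm p = ∑ m ∈ s, |coeff m p| :=
  Finset.sum_subset hs fun m _ hm => by rw [notMem_support_iff.mp hm, abs_zero]

lemma l1Norm_add_le (p q : MvPolynomial σ ℤ) : l1Norm (p + q) ≤ l1Norm p + l1Norm q := by
  classical
  rw [l1Norm_eq_sum_of_support_subset support_add,
    l1Norm_eq_sum_of_support_subset Finset.subset_union_left,
    l1Norm_eq_sum_of_support_subset (Finset.subset_union_right (s₁ := p.support)),
    ← Finset.sum_add_distrib]
  exact Finset.sum_le_sum fun m _ => by rw [coeff_add]; exact abs_add_le _ _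

@[simp]
lemma l1Norm_monomial (m : σ →₀ ℕ) (c : ℤ) : l1Norm (monomial m c) = |c| := by
  classical
  rw [l1Norm_eq_sum_of_support_subset support_monomial_subset, Finset.sum_singleton,
    coeff_monomial, if_pos rfl]

lemma abs_coeff_mul_le (p S : MvPolynomial σ ℤ) (n : σ →₀ ℕ) {B : ℤ} (hB : 0 ≤ B)
    (h : ∀ m ∈ p.support, m ≤ n → |coeff (n - m) S| ≤ B) :
    |coeff n (p * S)| ≤ l1Norm p * B := by
  conv_lhs => rw [p.as_sum, Finset.sum_mul, coeff_sum]
  refine (Finset.abs_sum_le_sum_abs _ _).trans ?_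
  rw [l1Norm, Finset.sum_mul]
  refine Finset.sum_le_sum fun m hm => ?_
  rw [coeff_monomial_mul']
  split_ifs with hmn
  · rw [abs_mul]
    exact mul_le_mul_of_nonneg_left (h m hm hmn) (abs_nonneg _)
  · rw [abs_zero]
    exact mul_nonneg (abs_nonneg _) hB

/-- Take `m` with `|coeff m S| = c` maximal and, among those, of maximal degree. At `m + e` the
term `a * coeff m S` is opposed by `R * S` with coefficients of size at most `c`, but by `Q * S`
only with coefficients of larger degree than `m`, hence of size at most `c - 1`. -/
lemma exists_le_abs_coeff_mul {e : σ →₀ ℕ} {a b : ℤ} {Q R S : MvPolynomial σ ℤ}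
    (hQ : Q.totalDegree < e.degree) (hdom : l1Norm Q + l1Norm R ≤ |a|)
    (hb : b + l1Norm R ≤ |a|) (hS : S ≠ 0) :
    ∃ n, b ≤ |coeff n ((monomial e a + Q + R) * S)| := by
  obtain ⟨m, hmS, hm⟩ := S.support.exists_max_image (fun g => toLex (|coeff g S|, g.degree))
    (Finset.nonempty_iff_ne_empty.mpr (support_eq_empty.not.mpr hS))
  set c := |coeff m S| with hc_def
  have hc : 1 ≤ c := Int.one_le_abs (mem_support_iff.mp hmS)
  have hle (g : σ →₀ ℕ) : |coeff g S| ≤ c := by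
    by_cases hg : g ∈ S.support
    · exact (Prod.Lex.toLex_le_toLex.mp (hm g hg)).elim le_of_lt fun h => h.1.le
    · rw [notMem_support_iff.mp hg, abs_zero]; omega
  have hlt (g : σ →₀ ℕ) (hdeg : m.degree < g.degree) : |coeff g S| ≤ c - 1 := by
    by_cases hg : g ∈ S.support
    · rcases Prod.Lex.toLex_le_toLex.mp (hm g hg) with h | h
      · omega
      · exact absurd h.2 (not_le.mpr hdeg)
    · rw [notMem_support_iff.mp hg, abs_zero]; omega
  refine ⟨m + e, ?_⟩
  have hQS : |coeff (m + e) (Q * S)| ≤ l1Norm Q * (c - 1) :=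
    abs_coeff_mul_le Q S _ (by omega) fun f hf hfle => hlt _ <| by
      have hsplit := congrArg Finsupp.degree (tsub_add_cancel_of_le hfle)
      have hf : f.degree < e.degree := (le_totalDegree hf).trans_lt hQ
      simp only [map_add] at hsplit
      omega
  have hRS : |coeff (m + e) (R * S)| ≤ l1Norm R * c :=
    abs_coeff_mul_le R S _ (by omega) fun _ _ _ => hle _
  rw [add_mul, add_mul, coeff_add, coeff_add, add_comm m e, coeff_monomial_mul, add_comm e m]
  set x := coeff (m + e) (Q * S)
  set y := coeff (m + e) (R * S)
  have htri : |a| * c ≤ |a * coeff m S + x + y| + |x| + |y| := calc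
    |a| * c = |a * coeff m S + x + y - x - y| := by rw [hc_def, ← abs_mul]; ring_nf
    _ ≤ |a * coeff m S + x + y| + |x| + |y| :=
      (abs_sub _ _).trans (add_le_add_left (abs_sub _ _) _)
  nlinarith [mul_nonneg (sub_nonneg.mpr hdom) (sub_nonneg.mpr hc), l1Norm_nonneg Q]

end L1Norm

lemma coeff_expand_eq_zero_or_exists {σ R : Type*} [CommSemiring R] {p : ℕ} (hp : p ≠ 0)
    (φ : MvPolynomial σ R) (n : σ →₀ ℕ) :
    coeff n (expand p φ) = 0 ∨ ∃ m, coeff n (expand p φ) = coeff m φ := by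
  classical
  by_cases hn : n ∈ (expand p φ).support
  · rw [support_expand (hp := hp), Finset.mem_image] at hn
    obtain ⟨m, -, rfl⟩ := hn
    exact Or.inr ⟨m, coeff_expand_smul p hp φ m⟩
  · exact Or.inl (notMem_support_iff.mp hn)

lemma aeval_C_mul_X_expand {σ R : Type*} [CommSemiring R] {n : ℕ} {c : σ → R}
    (hc : ∀ i, c i ^ n = 1) (v : MvPolynomial σ R) :
    aeval (fun i => C (c i) * X i) (expand n v) = expand n v := by
  have hpow : (fun i => C (c i) * X i) ^ n = fun i => (X i : MvPolynomial σ R) ^ n :=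
    _root_.funext fun i => by rw [Pi.pow_apply, mul_pow, ← map_pow, hc, map_one, one_mul]
  rw [aeval_expand, hpow]
  rfl

/-- A polynomial with invertible constant term is invertible as a power series, so a quotient by
it computed over `S` has its coefficients in the image of `R`. -/
lemma dvd_of_map_dvd_map {σ R S : Type*} [CommRing R] [CommRing S] {f : R →+* S}
    (hf : Function.Injective f) {p q : MvPolynomial σ R} (hp : IsUnit (constantCoeff p))
    (h : map f p ∣ map f q) : p ∣ q := by
  obtain ⟨r, hr⟩ := h
  obtain ⟨w, hw⟩ : ∃ w : MvPowerSeries σ R, w * p = 1 := by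
    refine (MvPowerSeries.isUnit_iff_constantCoeff.mpr ?_).exists_left_inv
    rwa [← MvPowerSeries.coeff_zero_eq_constantCoeff_apply, coeff_coe, ← constantCoeff_eq]
  have hcoe (t : MvPolynomial σ R) :
      ((map f t : MvPolynomial σ S) : MvPowerSeries σ S) = MvPowerSeries.map f t := by
    ext; simp [coeff_map]
  have hr' : (r : MvPowerSeries σ S) = MvPowerSeries.map f (w * (q : MvPowerSeries σ R)) := calc
    (r : MvPowerSeries σ S) = MvPowerSeries.map f (w * (p : MvPowerSeries σ R)) * r := by
      rw [hw, map_one, one_mul]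
    _ = MvPowerSeries.map f w * ((map f p * r : MvPolynomial σ S) : MvPowerSeries σ S) := by
      rw [map_mul, coe_mul, hcoe, mul_assoc]
    _ = MvPowerSeries.map f (w * (q : MvPowerSeries σ R)) := by rw [← hr, hcoe, map_mul]
  obtain ⟨r₀, rfl⟩ : r ∈ Set.range (map f) := mem_range_map_iff_coeffs_subset.mpr fun c hc => by
    obtain ⟨m, -, rfl⟩ := mem_coeffs_iff.mp hc
    exact ⟨MvPowerSeries.coeff m (w * q), by rw [← coeff_coe, hr', MvPowerSeries.coeff_map]⟩
  exact ⟨r₀, map_injective f hf (by rw [hr, map_mul])⟩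

end MvPolynomial

section CubeRoots

variable {R : Type*} [CommRing R] {ω : R}

lemma cube_sub_cube_eq_prod (hω : ω ^ 2 + ω + 1 = 0) (a b : R) :
    a ^ 3 - b ^ 3 = (a - b) * (a - ω * b) * (a - ω ^ 2 * b) := by
  linear_combination (b - a) * ((ω - 1) * b ^ 2 - a * b) * hω

lemma sum_cubes_sub_mul_eq_prod (hω : ω ^ 2 + ω + 1 = 0) (a b c : R) :
    a ^ 3 + b ^ 3 + c ^ 3 - 3 * a * b * c =
      (a + b + c) * (a + ω * b + ω ^ 2 * c) * (a + ω ^ 2 * b + ω * c) := by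
  linear_combination (-(ω ^ 2 - ω + 3) * a * b * c - ω * a * (b ^ 2 + c ^ 2) - a ^ 2 * (b + c)
      - ω ^ 2 * b * c * (b + c) - (ω - 1) * (b ^ 3 + c ^ 3)) * hω

end CubeRoots

noncomputable section

def affineForm {R : Type*} [CommSemiring R] (α β : R) : MvPolynomial (Fin 2) R :=
  1 + C α * X 0 + C β * X 1

/-- The product of the nine forms `1 + αx + βy` with `α³ = β³ = 1`. -/
def cubicNorm (R : Type*) [CommRing R] : MvPolynomial (Fin 2) R :=
  (1 + X 0 ^ 3 + X 1 ^ 3) ^ 3 - 27 * X 0 ^ 3 * X 1 ^ 3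

lemma map_cubicNorm {R S : Type*} [CommRing R] [CommRing S] (f : R →+* S) :
    map f (cubicNorm R) = cubicNorm S := by
  simp [cubicNorm]

/-- Grouping the pairs `(ω^k, ω^(2k+j))` by `j`, each group multiplies out to
`1 + x³ + y³ - 3ω^j xy`, and the three groups to `(1 + x³ + y³)³ - 27x³y³`. -/
lemma prod_affineForm_eq_cubicNorm {R : Type*} [CommRing R] {ω : R} (hω : ω ^ 2 + ω + 1 = 0) :
    ∏ kj : Fin 3 × Fin 3, affineForm (ω ^ (kj.1 : ℕ)) (ω ^ (2 * kj.1 : ℕ) * ω ^ (kj.2 : ℕ)) =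
      cubicNorm R := by
  have hW : C ω ^ 2 + C ω + 1 = (0 : MvPolynomial (Fin 2) R) := by
    simpa using congrArg C hω
  have hω3 : ω ^ 3 = 1 := by linear_combination (ω - 1) * hω
  have hω4 : C ω ^ 4 = (C ω : MvPolynomial (Fin 2) R) := by
    rw [← map_pow, show ω ^ 4 = ω by linear_combination (ω ^ 2 - ω) * hω]
  have row (γ : R) (hγ : γ ^ 3 = 1) :
      ∏ k : Fin 3, affineForm (ω ^ (k : ℕ)) (ω ^ (2 * k : ℕ) * γ) =
        (1 + X 0 ^ 3 + X 1 ^ 3) - 3 * C γ * X 0 * X 1 := by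
    have hG : C γ ^ 3 = (1 : MvPolynomial (Fin 2) R) := by rw [← map_pow, hγ, map_one]
    simp only [Fin.prod_univ_three, affineForm, Fin.val_zero, Fin.val_one, Fin.val_two, pow_zero,
      pow_one, mul_zero, mul_one, one_mul, Nat.reduceMul, C_mul, C_pow, hω4]
    linear_combination (sum_cubes_sub_mul_eq_prod hW 1 (X 0) (C γ * X 1)).symm + X 1 ^ 3 * hG
  rw [Fintype.prod_prod_type_right]
  simp only [fun j : Fin 3 => row (ω ^ (j : ℕ)) (by rw [← pow_mul, mul_comm, pow_mul, hω3, one_pow]),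
    Fin.prod_univ_three, Fin.val_zero, Fin.val_one, Fin.val_two, pow_zero, pow_one, mul_one,
    C_pow]
  rw [cubicNorm]
  linear_combination (cube_sub_cube_eq_prod hW (1 + X 0 ^ 3 + X 1 ^ 3) (3 * X 0 * X 1)).symm

lemma prime_affineForm {K : Type*} [Field K] {α : K} (β : K) (hα : α ≠ 0) :
    Prime (affineForm α β) := by
  rw [← MulEquiv.prime_iff (finSuccEquiv K 1).toMulEquiv]
  have hC (a : K) : finSuccEquiv K 1 (C a) = Polynomial.C (C a) := (finSuccEquiv K 1).commutes a
  have hα' : Polynomial.C (C α) * Polynomial.C (C α⁻¹) =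
      (1 : Polynomial (MvPolynomial (Fin 1) K)) := by
    rw [← map_mul, ← map_mul, mul_inv_cancel₀ hα, map_one, map_one]
  have h : finSuccEquiv K 1 (affineForm α β) =
      Polynomial.C (C α) * (Polynomial.X - Polynomial.C (-(C α⁻¹ * (1 + C β * X 0)))) := by
    have hX1 : (X 1 : MvPolynomial (Fin 2) K) = X (Fin.succ 0) := rfl
    simp only [affineForm, hX1, map_add, map_one, map_mul, map_neg, finSuccEquiv_X_zero,
      finSuccEquiv_X_succ, hC]
    linear_combination (1 + Polynomial.C (C β) * Polynomial.C (X 0)) * hα'.symm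
  change Prime (finSuccEquiv K 1 (affineForm α β))
  rw [h]
  exact (associated_unit_mul_left _ _ (hα.isUnit.map (Polynomial.C.comp C))).symm.prime
    (Polynomial.prime_X_sub_C _)

lemma affineForm_not_dvd {K : Type*} [Field K] {α β α' β' : K} (hα : α ≠ 0) (hβ : β ≠ 0)
    (hne : (α, β) ≠ (α', β')) : ¬ affineForm α β ∣ affineForm α' β' := by
  intro hdvd
  have key (z₀ z₁ : K) (hz : 1 + α * z₀ + β * z₁ = 0) : 1 + α' * z₀ + β' * z₁ = 0 := by
    have heval (a b : K) : eval ![z₀, z₁] (affineForm a b) = 1 + a * z₀ + b * z₁ := by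
      simp [affineForm]
    rw [← heval] at hz ⊢
    exact zero_dvd_iff.mp (hz ▸ map_dvd (eval _) hdvd)
  by_cases hββ : β = β'
  · have := key (-α⁻¹) 0 (by field_simp; ring)
    field_simp at this
    exact hne (Prod.ext (by linear_combination this) hββ)
  · have := key 0 (-β⁻¹) (by field_simp; ring)
    field_simp at this
    exact hββ (by linear_combination this)

lemma affineForm_dvd_expand {R : Type*} [CommSemiring R] {n : ℕ} {α β : R} (hα : α ^ n = 1)
    (hβ : β ^ n = 1) {v : MvPolynomial (Fin 2) R} (h : 1 + X 0 + X 1 ∣ expand n v) :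
    affineForm α β ∣ expand n v := by
  have hc : ∀ i, ![α, β] i ^ n = 1 := by simp [Fin.forall_fin_two, hα, hβ]
  have hφ : aeval (fun i => C (![α, β] i) * X i) (1 + X 0 + X 1 : MvPolynomial (Fin 2) R) =
      affineForm α β := by
    simp [affineForm]
  have := map_dvd (aeval fun i => C (![α, β] i) * X i) h
  rwa [hφ, aeval_C_mul_X_expand hc] at this

lemma cubicNorm_dvd_expand {K : Type*} [Field K] {ω : K} (hω : IsPrimitiveRoot ω 3)
    {v : MvPolynomial (Fin 2) K} (h : 1 + X 0 + X 1 ∣ expand 3 v) : cubicNorm K ∣ expand 3 v := by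
  have hω2 : ω ^ 2 + ω + 1 = 0 := by
    have := hω.geom_sum_eq_zero (by norm_num)
    simp only [Finset.sum_range_succ, Finset.sum_range_zero] at this
    linear_combination this
  have hpow (i : ℕ) : (ω ^ i) ^ 3 = 1 := by rw [← pow_mul, mul_comm, pow_mul, hω.pow_eq_one, one_pow]
  have hne (i : ℕ) : ω ^ i ≠ 0 := pow_ne_zero i (hω.ne_zero (by norm_num))
  rw [← prod_affineForm_eq_cubicNorm hω2]
  refine Fintype.prod_dvd_of_isRelPrime (fun kj kj' hkj => ?_)
    fun kj => affineForm_dvd_expand (hpow _) (by rw [← pow_add]; exact hpow _) h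
  refine ((prime_affineForm _ (hne _)).irreducible.isRelPrime_iff_not_dvd).mpr
    (affineForm_not_dvd (hne _) (by rw [← pow_add]; exact hne _) fun heq => hkj ?_)
  obtain ⟨hk, hj⟩ := Prod.mk.inj heq
  have hk' : kj.1 = kj'.1 := Fin.ext (hω.pow_inj kj.1.isLt kj'.1.isLt hk)
  rw [hk', mul_right_inj' (hne _)] at hj
  exact Prod.ext hk' (Fin.ext (hω.pow_inj kj.2.isLt kj'.2.isLt hj))

open Finsupp in
lemma cubicNorm_int_eq :
    cubicNorm ℤ = monomial (single 0 3 + single 1 3) (-21) +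
      (monomial 0 1 + monomial (single 0 3) 3 + monomial (single 1 3) 3) +
      (monomial (single 0 6) 3 + monomial (single 1 6) 3 + monomial (single 0 9) 1 +
        monomial (single 0 6 + single 1 3) 3 + monomial (single 0 3 + single 1 6) 3 +
        monomial (single 1 9) 1) := by
  simp only [cubicNorm, monomial_add_single, ← C_mul_X_pow_eq_monomial, monomial_zero']
  simp only [map_neg, map_one, map_ofNat]
  ring

lemma exists_seven_le_abs_coeff_cubicNorm_mul {S : MvPolynomial (Fin 2) ℤ} (hS : S ≠ 0) :
    ∃ n, 7 ≤ |coeff n (cubicNorm ℤ * S)| := by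
  rw [cubicNorm_int_eq]
  apply exists_le_abs_coeff_mul _ _ _ hS
  · grw [totalDegree_add, totalDegree_add]
    simp [totalDegree_monomial]
  all_goals
    repeat grw [l1Norm_add_le]
    simp only [l1Norm_monomial]
    norm_num

end

/-- If `u(x,y)` is a nonzero integer polynomial with coefficients in `{-1,0,1}`,
then `1 + x + y` does not divide `u(x³, y³)` in `ℤ[x,y]`. -/
theorem one_add_x_add_y_not_dvd_flat_in_cubes (u : MvPolynomial (Fin 2) ℤ)
    (hu : u ≠ 0) (hflat : ∀ m, coeff m u ∈ ({-1, 0, 1} : Set ℤ)) :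
    ¬ (1 + X 0 + X 1 : MvPolynomial (Fin 2) ℤ) ∣
        aeval (fun i => (X i : MvPolynomial (Fin 2) ℤ) ^ 3) u := by
  change ¬ _ ∣ expand 3 u
  intro hdvd
  have hℂ : cubicNorm ℂ ∣ expand 3 (map (Int.castRingHom ℂ) u) := by
    refine cubicNorm_dvd_expand (Complex.isPrimitiveRoot_exp 3 (by norm_num)) ?_
    simpa [map_expand] using map_dvd (map (Int.castRingHom ℂ)) hdvd
  obtain ⟨S, hS⟩ : cubicNorm ℤ ∣ expand 3 u :=
    dvd_of_map_dvd_map (f := Int.castRingHom ℂ) Int.cast_injective (by simp [cubicNorm])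
      (by rwa [map_cubicNorm, map_expand])
  have hS0 : S ≠ 0 := by
    rintro rfl
    exact hu ((expand_eq_zero three_pos).mp (by rwa [mul_zero] at hS))
  obtain ⟨n, hn⟩ := exists_seven_le_abs_coeff_cubicNorm_mul hS0
  have hflat' : |coeff n (expand 3 u)| ≤ 1 := by
    obtain h | ⟨m, h⟩ := coeff_expand_eq_zero_or_exists three_ne_zero u n
    · simp [h]
    · have h' := hflat m
      simp only [Set.mem_insert_iff, Set.mem_singleton_iff] at h'
      rw [h, abs_le]
      omega
  rw [hS] at hflat'
  omega
end

section
/- Let φ be a Laurent polynomial in one variable x over ℤ that is irreducible and not a generalized cyclotomic (i.e., it divides no Laurent polynomial of the form x^k − 1 with k ≠ 0). Then φ satisfies the spaced polynomial property: there exists N > 0 such that φ divides no nonzero Laurent polynomial u(x^N) with u having coefficients in {-1,0,1}. -/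
/-!
Write `φ` up to a unit `x^m` as an irreducible integer polynomial `q` with `q(0) ≠ 0`; a
divisibility `φ ∣ u(x^N)` becomes `q ∣ v(X^N)` for a polynomial `v ≠ 0` with coefficients in
`{-1, 0, 1}`. Such a `v` has leading coefficient `±1`, and by Cauchy's bound all its complex roots
have modulus `< 2`. So if the leading coefficient of `q` is not `±1`, any `N` works, and if `q`
has a root `λ` with `|λ| > 1`, any `N` with `|λ|^N ≥ 2` works, since `λ^N` would be a root of `v`.
Otherwise the Mahler measure of `q` is `1`, and by Kronecker's theorem `q` is cyclotomic.
-/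

open Polynomial LaurentPolynomial

namespace Polynomial

section Laurent

variable {R : Type*} [CommRing R] [IsDomain R]

theorem dvd_of_toLaurent_dvd_toLaurent {p w : R[X]} (hp : ¬X ∣ p)
    (h : toLaurent p ∣ toLaurent w) : p ∣ w := by
  obtain ⟨f, hf⟩ := h
  obtain ⟨n, q, hq⟩ := exists_T_pow f
  have hwq : w * X ^ n = p * q := toLaurent_injective <| by
    rw [map_mul, map_mul, toLaurent_X_pow, hq, hf, mul_assoc]
  obtain ⟨r, rfl⟩ := prime_X.pow_dvd_of_dvd_mul_left n hp ⟨w, by rw [← hwq, mul_comm]⟩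
  exact ⟨r, mul_right_cancel₀ (pow_ne_zero n X_ne_zero) (by rw [hwq]; ring)⟩

theorem irreducible_of_irreducible_toLaurent {p : R[X]} (hp : ¬X ∣ p)
    (h : Irreducible (toLaurent p)) : Irreducible p := by
  have isUnit_of_dvd {c : R[X]} (hc : c ∣ p) (hu : IsUnit (toLaurent c)) : IsUnit c :=
    isUnit_of_dvd_one <| dvd_of_toLaurent_dvd_toLaurent (fun hX => hp (hX.trans hc))
      (by simpa using hu.dvd)
  refine ⟨fun hu => h.not_isUnit (hu.map toLaurent), fun a b hab => ?_⟩
  rcases h.isUnit_or_isUnit (by rw [hab, map_mul]) with ha | hb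
  · exact .inl (isUnit_of_dvd ⟨b, hab⟩ ha)
  · exact .inr (isUnit_of_dvd ⟨a, by rw [hab, mul_comm]⟩ hb)

end Laurent

section Shift

variable {R : Type*} [Semiring R] {v : R[X]} {u : R[T;T⁻¹]} {n : ℕ}

theorem ne_zero_of_toLaurent_eq_mul_T (hv : toLaurent v = u * T n) (hu : u ≠ 0) : v ≠ 0 :=
  fun h => hu <| (isUnit_T (n : ℤ)).mul_left_eq_zero.mp (by rw [← hv, h, map_zero])

theorem coeff_eq_of_toLaurent_eq_mul_T (hv : toLaurent v = u * T n) (k : ℕ) :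
    v.coeff k = u.coeff (k - n) := by
  have h := congrArg (fun f : R[T;T⁻¹] => f.coeff k) hv
  simp only [coeff_toLaurent, T, AddMonoidAlgebra.coeff_mul_single_apply, mul_one] at h
  rw [sub_eq_add_neg, ← h]
  exact (Finsupp.mapDomain_apply Nat.castEmbedding.injective _ k).symm

end Shift

end Polynomial

namespace LaurentPolynomial

variable {R : Type*} [CommRing R]

theorem exists_associated_toLaurent_not_X_dvd {φ : R[T;T⁻¹]} (hφ : φ ≠ 0) :
    ∃ q : R[X], ¬X ∣ q ∧ Associated (toLaurent q) φ := by
  obtain ⟨n, p, hp⟩ := exists_T_pow φ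
  obtain ⟨q, hpq, hq⟩ :=
    p.exists_eq_pow_rootMultiplicity_mul_and_not_dvd (ne_zero_of_toLaurent_eq_mul_T hp hφ) 0
  rw [C_0, sub_zero] at hpq hq
  refine ⟨q, hq, (associated_unit_mul_left _ _ (isUnit_T (p.rootMultiplicity 0))).symm.trans ?_⟩
  rw [← toLaurent_X_pow, ← map_mul, ← hpq, hp]
  exact associated_mul_unit_left _ _ (isUnit_T _)

theorem mapDomain_mul_left_toLaurent (N : ℕ) (p : R[X]) :
    AddMonoidAlgebra.mapDomain (fun n : ℤ => (N : ℤ) * n) (toLaurent p) =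
      toLaurent (expand R N p) := by
  let e := AddMonoidAlgebra.mapDomainRingHom R (AddMonoidHom.mulLeft (N : ℤ))
  show e.comp toLaurent p = toLaurent.comp (expand R N : R[X] →+* R[X]) p
  congr 1
  refine ringHom_ext (fun a => ?_) ?_
  · simp only [e, RingHom.comp_apply, toLaurent_C, ← single_eq_C,
      AddMonoidAlgebra.mapDomainRingHom_apply, AddMonoidAlgebra.mapDomain_single]
    simp
  · simp only [e, RingHom.comp_apply, toLaurent_X, T, AddMonoidAlgebra.mapDomainRingHom_apply,
      AddMonoidAlgebra.mapDomain_single]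
    simp

theorem mapDomain_mul_left_mul_T (N : ℕ) (f : R[T;T⁻¹]) (m : ℤ) :
    AddMonoidAlgebra.mapDomain (fun n : ℤ => (N : ℤ) * n) (f * T m) =
      AddMonoidAlgebra.mapDomain (fun n : ℤ => (N : ℤ) * n) f * T (N * m) := by
  have := map_mul (AddMonoidAlgebra.mapDomainRingHom R (AddMonoidHom.mulLeft (N : ℤ))) f (T m)
  simp only [AddMonoidAlgebra.mapDomainRingHom_apply, T, AddMonoidAlgebra.mapDomain_single] at this
  exact this

theorem dvd_expand_of_dvd_mapDomain [IsDomain R] {φ : R[T;T⁻¹]} {q : R[X]} (hqX : ¬X ∣ q)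
    (hqφ : Associated (toLaurent q) φ) {u : R[T;T⁻¹]} {v : R[X]} {n : ℕ}
    (hv : toLaurent v = u * T n) {N : ℕ}
    (h : φ ∣ AddMonoidAlgebra.mapDomain (fun m : ℤ => (N : ℤ) * m) u) :
    q ∣ expand R N v := by
  refine dvd_of_toLaurent_dvd_toLaurent hqX ?_
  rw [← mapDomain_mul_left_toLaurent, hv, mapDomain_mul_left_mul_T]
  exact (hqφ.dvd.trans h).mul_right _

end LaurentPolynomial

namespace Polynomial

theorem isUnit_leadingCoeff_of_abs_coeff_le_one {v : ℤ[X]} (hv : v ≠ 0)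
    (hcoeff : ∀ k, |v.coeff k| ≤ 1) : IsUnit v.leadingCoeff :=
  Int.isUnit_iff_abs_eq.mpr <| le_antisymm (hcoeff _)
    (Int.one_le_abs (leadingCoeff_ne_zero.mpr hv))

theorem norm_lt_two_of_aeval_eq_zero {v : ℤ[X]} (hv : v ≠ 0) (hcoeff : ∀ k, |v.coeff k| ≤ 1)
    {z : ℂ} (hz : aeval z v = 0) : ‖z‖ < 2 := by
  set w := v.map (Int.castRingHom ℂ)
  have hw : w ≠ 0 := (Polynomial.map_ne_zero_iff (RingHom.injective_int _)).mpr hv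
  have hroot : w.IsRoot z := by simpa [w, aeval_def, eval₂_eq_eval_map] using hz
  have hbound : w.cauchyBound ≤ 2 := by
    have hcoeff' (k : ℕ) : ‖w.coeff k‖₊ ≤ 1 := by
      simpa [w, ← NNReal.coe_le_coe, Int.norm_eq_abs] using
        (Int.cast_le (R := ℝ)).mpr (hcoeff k)
    have hlc : ‖w.leadingCoeff‖₊ = 1 := by
      rw [leadingCoeff_map_of_injective (RingHom.injective_int _)]
      rcases Int.isUnit_iff.mp (isUnit_leadingCoeff_of_abs_coeff_le_one hv hcoeff) with h | h <;>
        simp [h]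
    rw [cauchyBound, hlc, div_one]
    have := Finset.sup_le (s := Finset.range w.natDegree) fun k _ => hcoeff' k
    exact (add_le_add_left this 1).trans_eq one_add_one_eq_two
  exact_mod_cast (hroot.norm_lt_cauchyBound hw).trans_le hbound

theorem not_dvd_expand_of_not_isUnit_leadingCoeff {q : ℤ[X]} (hq : ¬IsUnit q.leadingCoeff)
    {N : ℕ} (hN : 0 < N) {v : ℤ[X]} (hv : v ≠ 0) (hcoeff : ∀ k, |v.coeff k| ≤ 1) :
    ¬q ∣ expand ℤ N v := fun h =>
  hq <| isUnit_of_dvd_unit (leadingCoeff_dvd_leadingCoeff h) <| by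
    rw [leadingCoeff_expand hN]
    exact isUnit_leadingCoeff_of_abs_coeff_le_one hv hcoeff

theorem not_dvd_expand_of_aeval_eq_zero {q : ℤ[X]} {z : ℂ} (hz : aeval z q = 0) {N : ℕ}
    (hN : 2 ≤ ‖z‖ ^ N) {v : ℤ[X]} (hv : v ≠ 0) (hcoeff : ∀ k, |v.coeff k| ≤ 1) :
    ¬q ∣ expand ℤ N v := fun h => by
  have : aeval (z ^ N) v = 0 := by
    rw [← expand_aeval]
    exact aeval_eq_zero_of_dvd_aeval_eq_zero h hz
  exact (norm_lt_two_of_aeval_eq_zero hv hcoeff this).not_ge (by rwa [norm_pow])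

theorem mahlerMeasure_map_eq_one_of_norm_aroots_le_one {p : ℤ[X]} (hlc : IsUnit p.leadingCoeff)
    (hroots : ∀ z ∈ p.aroots ℂ, ‖z‖ ≤ 1) :
    (p.map (Int.castRingHom ℂ)).mahlerMeasure = 1 := by
  rw [mahlerMeasure_eq_leadingCoeff_mul_prod_roots,
    leadingCoeff_map_of_injective (RingHom.injective_int _)]
  have : ∀ a ∈ (p.map (Int.castRingHom ℂ)).roots, max 1 ‖a‖ = 1 := fun a ha =>
    max_eq_left (hroots a (by simpa [aroots] using ha))
  rcases Int.isUnit_iff.mp hlc with h | h <;> simp [Multiset.map_congr rfl this, h]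

theorem exists_dvd_X_pow_sub_one_of_norm_aroots_le_one {q : ℤ[X]} (hq : Irreducible q)
    (hqX : ¬X ∣ q) (hlc : IsUnit q.leadingCoeff) (hroots : ∀ z ∈ q.aroots ℂ, ‖z‖ ≤ 1) :
    ∃ n, 0 < n ∧ q ∣ X ^ n - 1 := by
  have hdeg : q.degree ≠ 0 := fun h => hq.not_isUnit <| by
    rw [eq_C_of_degree_eq_zero h]
    exact isUnit_C.mpr (by rwa [leadingCoeff, natDegree_eq_of_degree_eq_some h] at hlc)
  obtain ⟨n, hn, hdvd⟩ := cyclotomic_dvd_of_mahlerMeasure_eq_one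
    (mahlerMeasure_map_eq_one_of_norm_aroots_le_one hlc hroots) hqX hdeg
  exact ⟨n, hn,
    ((cyclotomic.irreducible hn).dvd_symm hq hdvd).trans (cyclotomic.dvd_X_pow_sub_one n ℤ)⟩

theorem exists_forall_not_dvd_expand {q : ℤ[X]} (hq : Irreducible q) (hqX : ¬X ∣ q)
    (hcyc : ∀ n, 0 < n → ¬q ∣ X ^ n - 1) :
    ∃ N, 0 < N ∧ ∀ v : ℤ[X], v ≠ 0 → (∀ k, |v.coeff k| ≤ 1) → ¬q ∣ expand ℤ N v := by
  by_cases hlc : IsUnit q.leadingCoeff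
  swap
  · exact ⟨1, one_pos, fun v hv hcoeff =>
      not_dvd_expand_of_not_isUnit_leadingCoeff hlc one_pos hv hcoeff⟩
  by_cases hroots : ∀ z ∈ q.aroots ℂ, ‖z‖ ≤ 1
  · obtain ⟨n, hn, hdvd⟩ := exists_dvd_X_pow_sub_one_of_norm_aroots_le_one hq hqX hlc hroots
    exact absurd hdvd (hcyc n hn)
  push Not at hroots
  obtain ⟨z, hz, hz1⟩ := hroots
  obtain ⟨N, hN⟩ := pow_unbounded_of_one_lt (2 : ℝ) hz1
  have hN0 : 0 < N := Nat.pos_of_ne_zero <| by rintro rfl; norm_num at hN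
  exact ⟨N, hN0, fun v hv hcoeff =>
    not_dvd_expand_of_aeval_eq_zero (mem_aroots.mp hz).2 hN.le hv hcoeff⟩

end Polynomial

/-- An irreducible one-variable Laurent polynomial over `ℤ` which is not a generalized
cyclotomic (divides no `x^k - 1` with `k ≠ 0`) satisfies the spaced polynomial property:
there is `N > 0` such that `φ` divides no nonzero Laurent polynomial `u(x^N)` where all
coefficients of `u` lie in `{-1,0,1}`. -/
theorem one_variable_spaced_polynomial_property (φ : LaurentPolynomial ℤ)
    (hirr : Irreducible φ)
    (hnc : ∀ k : ℤ, k ≠ 0 → ¬ φ ∣ (LaurentPolynomial.T k - 1)) :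
    ∃ N : ℕ, 0 < N ∧ ∀ u : LaurentPolynomial ℤ, u ≠ 0 →
      (∀ n : ℤ, u.coeff n ∈ ({-1, 0, 1} : Set ℤ)) →
      ¬ φ ∣ AddMonoidAlgebra.mapDomain (fun n : ℤ => (N : ℤ) * n) u := by
  obtain ⟨q, hqX, hqφ⟩ := exists_associated_toLaurent_not_X_dvd hirr.ne_zero
  have hq : Irreducible q :=
    irreducible_of_irreducible_toLaurent hqX (hqφ.irreducible_iff.mpr hirr)
  have hcyc (n : ℕ) (hn : 0 < n) : ¬q ∣ X ^ n - 1 := fun h =>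
    hnc n (by positivity) (hqφ.dvd_iff_dvd_left.mp (by simpa using map_dvd toLaurent h))
  obtain ⟨N, hN, hspaced⟩ := exists_forall_not_dvd_expand hq hqX hcyc
  refine ⟨N, hN, fun u hu hcoeff hdvd => ?_⟩
  obtain ⟨n, v, hv⟩ := exists_T_pow u
  have hvcoeff (k : ℕ) : |v.coeff k| ≤ 1 := by
    rw [coeff_eq_of_toLaurent_eq_mul_T hv]
    rcases hcoeff ((k : ℤ) - n) with h | h | h <;> rw [h] <;> norm_num
  exact hspaced v (ne_zero_of_toLaurent_eq_mul_T hv hu) hvcoeff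
    (dvd_expand_of_dvd_mapDomain hqX hqφ hv hdvd)
end

section
/- Let p ∈ ℤ[x] be a polynomial with a complex root λ satisfying |λ| > 2. If u ∈ ℤ[x] is a nonzero polynomial with all coefficients in {-1,0,1}, then p does not divide u. -/
/-!
A root `λ` of `p` is a root of `u = p * q`. With `d = deg u`, the leading term `±λ^d` of `u(λ)`
has norm `‖λ‖^d`, while the lower terms have norm at most `∑_{i<d} ‖λ‖^i ≤ ‖λ‖^d - 1` because
`‖λ‖ ≥ 2`, so they cannot cancel it.
-/

open Polynomial Finset

theorem geom_sum_le_pow_sub_one {R : Type*} [Ring R] [LinearOrder R] [IsOrderedRing R]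
    {r : R} (hr : 2 ≤ r) (d : ℕ) : ∑ i ∈ range d, r ^ i ≤ r ^ d - 1 := by
  induction d with
  | zero => simp
  | succ d ih =>
    have hrd : 0 ≤ r ^ d := pow_nonneg (zero_le_two.trans hr) d
    calc ∑ i ∈ range (d + 1), r ^ i ≤ r ^ d - 1 + r ^ d := by
          rw [sum_range_succ]; exact add_le_add_left ih _
      _ = r ^ d * 2 - 1 := by rw [mul_two]; abel
      _ ≤ r ^ d * r - 1 := by gcongr
      _ = r ^ (d + 1) - 1 := by rw [pow_succ]

section FlatCoefficient

variable {K : Type*} [NormedRing K] [NormOneClass K] {c : ℤ}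

theorem norm_intCast_le_one_of_mem (hc : c ∈ ({-1, 0, 1} : Set ℤ)) : ‖(c : K)‖ ≤ 1 := by
  rcases hc with rfl | rfl | rfl <;> simp

theorem norm_intCast_eq_one_of_mem (hc : c ∈ ({-1, 0, 1} : Set ℤ)) (h0 : c ≠ 0) :
    ‖(c : K)‖ = 1 := by
  rcases hc with rfl | rfl | rfl <;> simp_all

end FlatCoefficient

theorem Polynomial.aeval_ne_zero_of_coeff_mem {K : Type*} [NormedDivisionRing K]
    {u : ℤ[X]} (hu : u ≠ 0) (hflat : ∀ n, u.coeff n ∈ ({-1, 0, 1} : Set ℤ))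
    {x : K} (hx : 2 ≤ ‖x‖) : aeval x u ≠ 0 := by
  set d := u.natDegree
  have hlead : ‖(u.coeff d : K) * x ^ d‖ = ‖x‖ ^ d := by
    rw [norm_mul, norm_pow, norm_intCast_eq_one_of_mem (hflat d) (leadingCoeff_ne_zero.mpr hu),
      one_mul]
  have hlower : ‖∑ i ∈ range d, (u.coeff i : K) * x ^ i‖ ≤ ‖x‖ ^ d - 1 :=
    calc _ ≤ ∑ i ∈ range d, ‖x‖ ^ i := norm_sum_le_of_le _ fun i _ => by
            rw [norm_mul, norm_pow]
            exact mul_le_of_le_one_left (by positivity) (norm_intCast_le_one_of_mem (hflat i))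
      _ ≤ ‖x‖ ^ d - 1 := geom_sum_le_pow_sub_one hx d
  have hsplit : aeval x u =
      ∑ i ∈ range d, (u.coeff i : K) * x ^ i + (u.coeff d : K) * x ^ d := by
    simp [aeval_eq_sum_range, sum_range_succ, zsmul_eq_mul, d]
  intro h
  rw [hsplit, add_eq_zero_iff_eq_neg] at h
  rw [h, norm_neg, hlead] at hlower
  linarith

/-- If `p ∈ ℤ[x]` has a complex root `λ` with `|λ| > 2`, then `p` divides no nonzero
polynomial all of whose coefficients lie in `{-1,0,1}`. -/
theorem not_dvd_flat_of_large_root (p : Polynomial ℤ) (lam : ℂ)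
    (hroot : Polynomial.aeval lam p = 0) (habs : 2 < ‖lam‖)
    (u : Polynomial ℤ) (hu : u ≠ 0)
    (hflat : ∀ n : ℕ, u.coeff n ∈ ({-1, 0, 1} : Set ℤ)) :
    ¬ p ∣ u := by
  rintro ⟨q, rfl⟩
  exact aeval_ne_zero_of_coeff_mem hu hflat habs.le (by rw [aeval_mul, hroot, zero_mul])
end

section
/- Let A = ℤ^d and B any nontrivial group, G = A ≀ B with projection π: G → A. Let δ₁, δ₂ ∈ G with δ₁ ≠ δ₂ and π(δ₁) = π(δ₂), and set δ' = δ₁^{-1}δ₂ (a nontrivial element of ⊕_{ℤ^d} B). If r₁,…,rₙ ∈ G have pairwise distinct projections to ℤ^d, then the conjugates γᵢ = rᵢ δ' rᵢ^{-1} are cube independent. -/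
/-!
Order `ℤ^d` lexicographically. Among the indices where two choices `ε ≠ ε'` differ, take the one
whose translation vector `v i₀` is largest, and let `a` be the largest point of the support of
`δ'`. At `x = v i₀ + a` the conjugate `γ i₀` is nonzero, while every other `γ i` with
`ε i ≠ ε' i` vanishes there, since `x - v i > a`. Evaluating both sums at `x` and cancelling the
terms that agree leaves `γ i₀ x = 0`.
-/

open Function Finsupp

theorem List.apply_eq_of_sum_ofFn_eq {M : Type*} [AddMonoid M] [IsCancelAdd M] :
    ∀ {n : ℕ} {t₁ t₂ : Fin n → M} (k : Fin n), (∀ i ≠ k, t₁ i = t₂ i) →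
      (List.ofFn t₁).sum = (List.ofFn t₂).sum → t₁ k = t₂ k
  | 0, _, _, k, _, _ => k.elim0
  | n + 1, t₁, t₂, k, hagree, hsum => by
    simp only [List.ofFn_succ, List.sum_cons] at hsum
    cases k using Fin.cases with
    | zero =>
      have htail : (fun i : Fin n => t₁ i.succ) = fun i => t₂ i.succ :=
        funext fun i => hagree _ i.succ_ne_zero
      rw [htail] at hsum
      exact add_right_cancel hsum
    | succ k =>
      rw [hagree 0 k.succ_ne_zero.symm] at hsum
      exact apply_eq_of_sum_ofFn_eq (t₁ := fun i => t₁ i.succ) (t₂ := fun i => t₂ i.succ) k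
        (fun i hi => hagree _ (Fin.succ_injective _ |>.ne hi)) (add_left_cancel hsum)

namespace Finsupp

variable {A B : Type*} [AddGroup B]

theorem conj_apply_eq_zero_iff (g s : A →₀ B) (x : A) :
    (g + s - g) x = 0 ↔ s x = 0 := by
  rw [sub_apply, add_apply, sub_eq_add_neg, addConj_eq_zero_iff]

theorem embDomain_addLeftEmbedding_apply_eq_zero_of_lt [AddCommGroup A] [LinearOrder A]
    [IsOrderedAddMonoid A] {δ : A →₀ B} {a : A} (ha : ∀ b ∈ δ.support, b ≤ a) {u w : A}
    (h : u < w) : embDomain (addLeftEmbedding u) δ (w + a) = 0 := by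
  have hshift : w + a = addLeftEmbedding u (w + a - u) := by simp
  rw [hshift, embDomain_apply_self, ← notMem_support_iff]
  intro hmem
  have : a < w + a - u := by
    rw [add_sub_right_comm]
    exact lt_add_of_pos_left a (sub_pos.mpr h)
  exact (ha _ hmem).not_gt this

end Finsupp

theorem injective_sum_ofFn_conj_translates {A B : Type*} [AddCommGroup A] [LinearOrder A]
    [IsOrderedAddMonoid A] [AddGroup B] {n : ℕ} {δ : A →₀ B} (hδ : δ ≠ 0) {v : Fin n → A}
    (hv : Injective v) {f γ : Fin n → A →₀ B}
    (hγ : ∀ i, γ i = f i + embDomain (addLeftEmbedding (v i)) δ - f i) :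
    Injective fun ε : Fin n → Bool => (List.ofFn fun i => if ε i then γ i else 0).sum := by
  intro ε ε' hsum
  by_contra hne
  obtain ⟨i₀, hi₀, hmax⟩ := (Finset.univ.filter fun i => ε i ≠ ε' i).exists_max_image v
    (by simpa [Finset.filter_nonempty_iff, funext_iff] using hne)
  obtain ⟨a, ha, hamax⟩ := δ.support.exists_max_image id (support_nonempty_iff.mpr hδ)
  set x := v i₀ + a
  have hγ_vanish : ∀ i ≠ i₀, ε i ≠ ε' i → γ i x = 0 := fun i hi hdiff => by
    rw [hγ, conj_apply_eq_zero_iff]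
    exact embDomain_addLeftEmbedding_apply_eq_zero_of_lt hamax
      ((hmax i (by simpa using hdiff)).lt_of_ne (hv.ne hi))
  have hγ_top : γ i₀ x ≠ 0 := by
    rw [hγ, Ne, conj_apply_eq_zero_iff]
    exact (embDomain_apply_self (addLeftEmbedding (v i₀)) δ a).trans_ne (mem_support_iff.mp ha)
  have hsum_x := congrArg (applyAddHom x) hsum
  simp only [map_list_sum, List.map_ofFn, comp_def, apply_ite, map_zero,
    applyAddHom_apply] at hsum_x
  have := List.apply_eq_of_sum_ofFn_eq i₀ (fun i hi => ?_) hsum_x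
  · have hdiff₀ : ε i₀ ≠ ε' i₀ := (Finset.mem_filter.mp hi₀).2
    revert this hdiff₀
    cases ε i₀ <;> cases ε' i₀ <;> simp [hγ_top, Ne.symm hγ_top]
  · by_cases hdiff : ε i = ε' i
    · simp [hdiff]
    · simp [hγ_vanish i hi hdiff]

/-- Cube independence in `ℤ^d ≀ B`: if `δ' ≠ 0` is a configuration in `⊕_{ℤ^d} B`
(written additively, `B` any nontrivial group written additively), and `γᵢ` is the
conjugate of `δ'` by an element `rᵢ` of the wreath product, whose projection to `ℤ^d`
is `v i` and whose lamp part is `f i` (so `γᵢ = f i + shift_{v i} δ' - f i`), with the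
`v i` pairwise distinct, then the `2ⁿ` products `γ₁^{ε₁}⋯γₙ^{εₙ}`, `εᵢ ∈ {0,1}`, are
pairwise distinct. -/
theorem wreath_conjugates_cube_independent {B : Type*} [AddGroup B] (d n : ℕ)
    (δ' : (Fin d → ℤ) →₀ B) (hδ : δ' ≠ 0)
    (v : Fin n → (Fin d → ℤ)) (hv : Function.Injective v)
    (f : Fin n → ((Fin d → ℤ) →₀ B)) (γ : Fin n → ((Fin d → ℤ) →₀ B))
    (hγ : ∀ i, γ i = f i + Finsupp.embDomain ⟨fun x => v i + x, add_right_injective (v i)⟩ δ' - f i) :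
    Function.Injective (fun ε : Fin n → Bool =>
      (List.ofFn fun i => if ε i then γ i else 0).sum) :=
  injective_sum_ofFn_conj_translates (A := Lex (Fin d → ℤ)) hδ hv hγ
end
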